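/- For all finite multisets Ω1, Ω2 of solution mappings, the simple difference satisfies: (e) (Ω1 ⋈ Ω2) \ Ω2 = ∅, and (f) (Ω1 \ Ω2) ⋈ Ω2 = ∅, as equalities of multisets. (These are the set-theoretic axioms (A ∩ B) \ B = ∅ and (A \ B) ∩ B = ∅ for the simple-difference operator.) -/
import Mathlib


open scoped Classical

noncomputable section

/-- A solution mapping: a finite partial function from variables to terms. -/
abbrev SMap (V T : Type) := Finmap (fun _ : V => T)

variable {V T : Type} [DecidableEq V] [DecidableEq T]

/-- Two solution mappings are compatible if they agree on the
intersection of their domains. -/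
def Compat (μ1 μ2 : SMap V T) : Prop :=
  ∀ x ∈ μ1, x ∈ μ2 → μ1.lookup x = μ2.lookup x

/-- Join of two multisets of solution mappings: unions of compatible pairs,
multiplicities multiply and add over all decompositions. -/
def mjoin (Ω1 Ω2 : Multiset (SMap V T)) : Multiset (SMap V T) :=
  Ω1.bind fun μ1 => (Ω2.filter fun μ2 => Compat μ1 μ2).map fun μ2 => μ1 ∪ μ2

/-- Simple difference: keep (with multiplicity) the mappings of `Ω1`
incompatible with every element of `Ω2`. -/
def msdiff (Ω1 Ω2 : Multiset (SMap V T)) : Multiset (SMap V T) :=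
  Ω1.filter fun μ1 => ∀ μ2 ∈ Ω2, ¬ Compat μ1 μ2

/-- SPARQL minus: keep (with multiplicity) the mappings of `Ω1` such that every
element of `Ω2` is incompatible with it or has disjoint domain. -/
def sminus (Ω1 Ω2 : Multiset (SMap V T)) : Multiset (SMap V T) :=
  Ω1.filter fun μ1 => ∀ μ2 ∈ Ω2, ¬ Compat μ1 μ2 ∨ μ1.keys ∩ μ2.keys = ∅

/-- Domain of a multiset of mappings: the union of the domains of its elements. -/
def mdom (Ω : Multiset (SMap V T)) : Finset V := (Ω.map Finmap.keys).sup

/-- A multiset of mappings is domain-uniform when all its elements have the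
same domain. -/
def DomUniform (Ω : Multiset (SMap V T)) : Prop :=
  ∀ μ1 ∈ Ω, ∀ μ2 ∈ Ω, Finmap.keys μ1 = Finmap.keys μ2

/-- Three truth values: true, false, error. -/
inductive TV where | t | f | e
deriving DecidableEq

/-- Strong Kleene conjunction. -/
def TV.andTV : TV → TV → TV
  | .t, q => q
  | .f, _ => .f
  | .e, .t => .e
  | .e, .f => .f
  | .e, .e => .e

/-- Strong Kleene disjunction. -/
def TV.orTV : TV → TV → TV
  | .t, _ => .t
  | .f, q => q
  | .e, .t => .t
  | .e, .f => .e
  | .e, .e => .e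

/-- Three-valued negation. -/
def TV.notTV : TV → TV
  | .t => .f
  | .f => .t
  | .e => .e

/-- Selection formulas, built from atoms `x = c`, `x = y` and `bound x`. -/
inductive SForm (V T : Type) where
  | eqc : V → T → SForm V T
  | eqv : V → V → SForm V T
  | bound : V → SForm V T
  | fand : SForm V T → SForm V T → SForm V T
  | for' : SForm V T → SForm V T → SForm V T
  | fnot : SForm V T → SForm V T

/-- Three-valued evaluation of a selection formula on a solution mapping. -/
def evalF (μ : SMap V T) : SForm V T → TV
  | .eqc x c =>
    match μ.lookup x with
    | some a => if a = c then .t else .f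
    | none => .e
  | .eqv x y =>
    match μ.lookup x, μ.lookup y with
    | some a, some b => if a = b then .t else .f
    | some _, none => .e
    | none, _ => .e
  | .bound x => if x ∈ μ then .t else .f
  | .fand F1 F2 => (evalF μ F1).andTV (evalF μ F2)
  | .for' F1 F2 => (evalF μ F1).orTV (evalF μ F2)
  | .fnot F1 => (evalF μ F1).notTV

/-- Selection: keep (with multiplicity) the mappings evaluating `F` to true. -/
def sel (F : SForm V T) (Ω : Multiset (SMap V T)) : Multiset (SMap V T) :=
  Ω.filter fun μ => evalF μ F = .t

/-- W3C difference: keep (with multiplicity) the mappings `μ1` of `Ω1` such that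
every `μ2 ∈ Ω2` is incompatible with `μ1`, or compatible with
`(μ1 ∪ μ2)(F) = false`. -/
def wdiff (F : SForm V T) (Ω1 Ω2 : Multiset (SMap V T)) : Multiset (SMap V T) :=
  Ω1.filter fun μ1 => ∀ μ2 ∈ Ω2,
    ¬ Compat μ1 μ2 ∨ (Compat μ1 μ2 ∧ evalF (μ1 ∪ μ2) F = .f)

end

private lemma compat_union_right {V T : Type} [DecidableEq V] [DecidableEq T]
    (μ1 μ2 : SMap V T) (h : Compat μ1 μ2) : Compat (μ1 ∪ μ2) μ2 := by
  intro x hx hx2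
  by_cases h1 : x ∈ μ1
  · rw [Finmap.lookup_union_left h1]; exact h x h1 hx2
  · rw [Finmap.lookup_union_right h1]

/-- the simple difference satisfies `(A ∩ B) \ B = ∅` and
`(A \ B) ∩ B = ∅`, with the join playing the role of the intersection. -/
theorem stmt_16 {V T : Type} [DecidableEq V] [DecidableEq T]
    (Ω1 Ω2 : Multiset (SMap V T)) :
    msdiff (mjoin Ω1 Ω2) Ω2 = 0 ∧ mjoin (msdiff Ω1 Ω2) Ω2 = 0 := by
  constructor
  · rw [Multiset.eq_zero_iff_forall_notMem]
    intro μ hμ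
    rw [msdiff, Multiset.mem_filter] at hμ
    obtain ⟨hmem, hall⟩ := hμ
    rw [mjoin, Multiset.mem_bind] at hmem
    obtain ⟨μ1, _, hmem2⟩ := hmem
    rw [Multiset.mem_map] at hmem2
    obtain ⟨μ2, hμ2, rfl⟩ := hmem2
    rw [Multiset.mem_filter] at hμ2
    exact hall μ2 hμ2.1 (compat_union_right μ1 μ2 hμ2.2)
  · rw [Multiset.eq_zero_iff_forall_notMem]
    intro μ hμ
    rw [mjoin, Multiset.mem_bind] at hμ
    obtain ⟨μ1, hμ1, hmem2⟩ := hμ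
    rw [Multiset.mem_map] at hmem2
    obtain ⟨μ2, hμ2, _⟩ := hmem2
    rw [Multiset.mem_filter] at hμ2
    rw [msdiff, Multiset.mem_filter] at hμ1
    exact hμ1.2 μ2 hμ2.1 hμ2.2
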